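/- arXiv:1509.03990 — 2 statements merged into one kernel-verified Lean document; each statement's English description precedes it below -/
import Mathlib

section
/- Let G be a finite simple graph with surplus(G) ≥ 1, let Z be a nonempty independent set of G with |N(Z)| = |Z| + 1, and let G' = G − (Z ∪ N(Z)). Then MM(G') − 2·LP(G') ≤ MM(G) − 2·LP(G) + |N(Z)|. -/
open scoped Classical

/-- A fractional vertex cover of `G`. -/
def IsFVC {V : Type} (G : SimpleGraph V) (x : V → ℝ) : Prop :=
  (∀ v, 0 ≤ x v ∧ x v ≤ 1) ∧ ∀ ⦃u v⦄, G.Adj u v → 1 ≤ x u + x v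

/-- The weight of a fractional vertex cover. -/
noncomputable def fvcWeight {V : Type} [Fintype V] (x : V → ℝ) : ℝ := ∑ v, x v

/-- `LP(G)`: the minimum weight of a fractional vertex cover of `G`. -/
noncomputable def LPopt {V : Type} [Fintype V] (G : SimpleGraph V) : ℝ :=
  sInf {w : ℝ | ∃ x : V → ℝ, IsFVC G x ∧ w = fvcWeight x}

/-- A matching of `G`: a set of pairwise vertex-disjoint edges of `G`. -/
def IsMatchingSet {V : Type} (G : SimpleGraph V) (M : Finset (Sym2 V)) : Prop :=
  (∀ e ∈ M, e ∈ G.edgeSet) ∧ ∀ e ∈ M, ∀ f ∈ M, e ≠ f → ∀ v : V, v ∈ e → v ∉ f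

/-- `MM(G)`: the maximum size of a matching of `G`. -/
noncomputable def MMnum {V : Type} (G : SimpleGraph V) : ℕ :=
  sSup {n : ℕ | ∃ M : Finset (Sym2 V), IsMatchingSet G M ∧ M.card = n}

/-- `OPT(G)`: the minimum size of a vertex cover of `G`. -/
noncomputable def VCnum {V : Type} (G : SimpleGraph V) : ℕ :=
  sInf {n : ℕ | ∃ S : Finset V, (∀ ⦃u v⦄, G.Adj u v → u ∈ S ∨ v ∈ S) ∧ S.card = n}

/-- `N(X)`: the set of vertices outside `X` having a neighbour in `X`. -/
def nbhd {V : Type} (G : SimpleGraph V) (X : Set V) : Set V :=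
  {v | v ∉ X ∧ ∃ u ∈ X, G.Adj u v}

/-- `X` is an independent set in `G`. -/
def IndepSet {V : Type} (G : SimpleGraph V) (X : Set V) : Prop :=
  ∀ u ∈ X, ∀ v ∈ X, ¬ G.Adj u v

/-- `surplus(G) ≥ s`: every nonempty independent set `X` satisfies `|N(X)| ≥ |X| + s`. -/
def SurplusGE {V : Type} (G : SimpleGraph V) (s : ℕ) : Prop :=
  ∀ X : Set V, X.Nonempty → IndepSet G X → X.ncard + s ≤ (nbhd G X).ncard

/-- The matching `M` saturates the vertex `v`. -/
def Saturates {V : Type} (M : Finset (Sym2 V)) (v : V) : Prop := ∃ e ∈ M, v ∈ e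

/-- `O(G)`: vertices left unsaturated by some maximum matching of `G`. -/
def OSet {V : Type} (G : SimpleGraph V) : Set V :=
  {v | ∃ M : Finset (Sym2 V), IsMatchingSet G M ∧ M.card = MMnum G ∧ ¬ Saturates M v}

/-- `I(G)`: vertices outside `O(G)` having a neighbour in `O(G)`. -/
def ISet {V : Type} (G : SimpleGraph V) : Set V := nbhd G (OSet G)

/-- `P(G)`: the remaining vertices. -/
def GEPSet {V : Type} (G : SimpleGraph V) : Set V := (OSet G ∪ ISet G)ᶜ

section Aux
variable {V : Type} [Fintype V]

lemma matching_bddAbove (G : SimpleGraph V) :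
    BddAbove {n : ℕ | ∃ M : Finset (Sym2 V), IsMatchingSet G M ∧ M.card = n} := by
  refine ⟨Fintype.card (Sym2 V), ?_⟩
  rintro n ⟨M, _, rfl⟩
  exact Finset.card_le_univ M

lemma le_MMnum (G : SimpleGraph V) (M : Finset (Sym2 V)) (hM : IsMatchingSet G M) :
    M.card ≤ MMnum G :=
  le_csSup (matching_bddAbove G) ⟨M, hM, rfl⟩

lemma exists_max_matching (G : SimpleGraph V) :
    ∃ M : Finset (Sym2 V), IsMatchingSet G M ∧ M.card = MMnum G := by
  have h : MMnum G ∈ {n : ℕ | ∃ M : Finset (Sym2 V), IsMatchingSet G M ∧ M.card = n} :=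
    Nat.sSup_mem ⟨0, ∅, ⟨by simp, by simp⟩, rfl⟩ (matching_bddAbove G)
  exact h

/-- Hall-type matching lemma. -/
lemma hall_indep (G : SimpleGraph V) (A : Set V)
    (h : ∀ X ⊆ A, X.Nonempty → X.ncard ≤ (nbhd G X).ncard) :
    ∃ f : A → V, Function.Injective f ∧ ∀ a : A, G.Adj a (f a) := by
  have key : ∀ s : Finset A, s.card ≤ (s.biUnion fun a : A => G.neighborFinset (a : V)).card := by
    intro s
    rcases s.eq_empty_or_nonempty with rfl | hs
    · simp
    · set X : Set V := Subtype.val '' (↑s : Set A) with hX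
      have hXA : X ⊆ A := by rintro v ⟨a, _, rfl⟩; exact a.2
      have hXne : X.Nonempty := hs.to_set.image _
      have h1 : s.card = X.ncard := by
        rw [hX, Set.ncard_image_of_injective _ Subtype.val_injective, Set.ncard_coe_finset]
      have h2 : nbhd G X ⊆ ↑(s.biUnion fun a : A => G.neighborFinset (a : V)) := by
        rintro v ⟨hv, u, ⟨a, ha, rfl⟩, hadj⟩
        simp only [Finset.coe_biUnion, Set.mem_iUnion, Finset.mem_coe,
          SimpleGraph.mem_neighborFinset]
        exact ⟨a, ha, hadj⟩
      calc s.card = X.ncard := h1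
        _ ≤ (nbhd G X).ncard := h X hXA hXne
        _ ≤ ((↑(s.biUnion fun a : A => G.neighborFinset (a : V)) : Set V)).ncard :=
            Set.ncard_le_ncard h2 (Set.toFinite _)
        _ = (s.biUnion fun a : A => G.neighborFinset (a : V)).card := Set.ncard_coe_finset _
  obtain ⟨f, hinj, hf⟩ := (Finset.all_card_le_biUnion_card_iff_exists_injective
      (fun a : A => G.neighborFinset (a : V))).mp key
  exact ⟨f, hinj, fun a => by simpa using hf a⟩

end Aux

/-- Reduction Rule 2 is safe:
`MM(G') − 2LP(G') ≤ MM(G) − 2LP(G) + |N(Z)|` for `G' = G − (Z ∪ N(Z))`. -/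
theorem rule_two_safe {V : Type} [Fintype V] (G : SimpleGraph V)
    (hsur : SurplusGE G 1) (Z : Set V) (hZne : Z.Nonempty) (hZind : IndepSet G Z)
    (hZsur : (nbhd G Z).ncard = Z.ncard + 1) :
    (MMnum (G.induce ((Z ∪ nbhd G Z)ᶜ)) : ℝ) -
        2 * LPopt (G.induce ((Z ∪ nbhd G Z)ᶜ)) ≤
      (MMnum G : ℝ) - 2 * LPopt G + ((nbhd G Z).ncard : ℝ) := by
  classical
  set N : Set V := nbhd G Z with hN
  set Ws : Set V := (Z ∪ N)ᶜ with hWs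
  set G' : SimpleGraph ↥Ws := G.induce Ws with hG'
  have hdisjZN : Disjoint Z N := Set.disjoint_left.mpr (fun v hv hvN => hvN.1 hv)
  -- Step A : a Hall matching from Z into N
  have hallZ : ∃ f : Z → V, Function.Injective f ∧ ∀ a : Z, G.Adj a (f a) := by
    apply hall_indep
    intro X hXZ hXne
    have hXind : IndepSet G X := fun u hu v hv => hZind u (hXZ hu) v (hXZ hv)
    have := hsur X hXne hXind
    omega
  obtain ⟨f, hfinj, hfadj⟩ := hallZ
  have hfN : ∀ a : Z, f a ∈ N := by
    intro a
    have hadj := hfadj a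
    have hfZ : f a ∉ Z := fun h => hZind a a.2 (f a) h hadj
    exact ⟨hfZ, a, a.2, hadj⟩
  -- Step B : G' has surplus ≥ 0
  have hsur' : ∀ X : Set ↥Ws, X.Nonempty → IndepSet G' X → X.ncard ≤ (nbhd G' X).ncard := by
    intro X hXne hXind
    set X0 : Set V := Subtype.val '' X with hX0
    have hX0W : X0 ⊆ Ws := by rintro v ⟨a, _, rfl⟩; exact a.2
    have hdisjZX0 : Disjoint Z X0 :=
      Set.disjoint_left.mpr (fun v hv hvX => (hX0W hvX) (Or.inl hv))
    have hindZX : IndepSet G (Z ∪ X0) := by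
      rintro u (hu | hu) v (hv | hv) hadj
      · exact hZind u hu v hv hadj
      · exact (hX0W hv) (Or.inr ⟨fun h => (hX0W hv) (Or.inl h), u, hu, hadj⟩)
      · exact (hX0W hu) (Or.inr ⟨fun h => (hX0W hu) (Or.inl h), v, hv, hadj.symm⟩)
      · obtain ⟨a, ha, rfl⟩ := hu
        obtain ⟨b, hb, rfl⟩ := hv
        exact hXind a ha b hb hadj
    have hsub : nbhd G (Z ∪ X0) ⊆ N ∪ (Subtype.val '' nbhd G' X) := by
      rintro v ⟨hv, u, hu, hadj⟩
      by_cases hvN : v ∈ N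
      · exact Or.inl hvN
      rcases hu with hu | hu
      · exact absurd (⟨fun h => hv (Or.inl h), u, hu, hadj⟩ : v ∈ N) hvN
      · have hvW : v ∈ Ws := by
          rw [hWs, Set.mem_compl_iff, Set.mem_union]
          push_neg
          exact ⟨fun h => hv (Or.inl h), hvN⟩
        obtain ⟨a, ha, rfl⟩ := hu
        refine Or.inr ⟨⟨v, hvW⟩, ⟨?_, a, ha, ?_⟩, rfl⟩
        · intro hmem
          exact hv (Or.inr ⟨⟨v, hvW⟩, hmem, rfl⟩)
        · exact hadj
    have h1 := hsur (Z ∪ X0) (hZne.mono Set.subset_union_left) hindZX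
    have h2 : (Z ∪ X0).ncard = Z.ncard + X.ncard := by
      rw [Set.ncard_union_eq hdisjZX0 (Set.toFinite _) (Set.toFinite _), hX0,
        Set.ncard_image_of_injective _ Subtype.val_injective]
    have h3 : (nbhd G (Z ∪ X0)).ncard ≤ N.ncard + (nbhd G' X).ncard := by
      calc (nbhd G (Z ∪ X0)).ncard ≤ (N ∪ Subtype.val '' nbhd G' X).ncard :=
            Set.ncard_le_ncard hsub (Set.toFinite _)
        _ ≤ N.ncard + (Subtype.val '' nbhd G' X).ncard := Set.ncard_union_le _ _
        _ = N.ncard + (nbhd G' X).ncard := by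
            rw [Set.ncard_image_of_injective _ Subtype.val_injective]
    rw [h2] at h1
    rw [hZsur] at h3
    omega
  -- Step C : LP(G') ≥ |Ws|/2
  have hLP' : (Fintype.card ↥Ws : ℝ) ≤ 2 * LPopt G' := by
    have hbound : ∀ w ∈ {w : ℝ | ∃ x : ↥Ws → ℝ, IsFVC G' x ∧ w = fvcWeight x},
        (Fintype.card ↥Ws : ℝ) / 2 ≤ w := by
      rintro w ⟨x, hx, rfl⟩
      set A : Set ↥Ws := {v | x v < 1/2} with hA
      have hAind : ∀ X ⊆ A, X.Nonempty → X.ncard ≤ (nbhd G' X).ncard := by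
        intro X hXA hXne
        refine hsur' X hXne ?_
        intro u hu v hv hadj
        have h1 : x u < 1/2 := hXA hu
        have h2 : x v < 1/2 := hXA hv
        have := hx.2 hadj
        linarith
      obtain ⟨g, hginj, hgadj⟩ := hall_indep G' A hAind
      have hgnA : ∀ a : A, g a ∉ A := by
        intro a ha
        have h1 : x ↑a < 1/2 := a.2
        have h2 : x (g a) < 1/2 := ha
        have := hx.2 (hgadj a)
        linarith
      set F : Finset ↥Ws := A.toFinset with hF
      set B : Finset ↥Ws := Finset.univ.image (fun a : A => g a) with hB
      have hFB : Disjoint F B := by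
        rw [Finset.disjoint_left]
        intro v hvF hvB
        obtain ⟨a, _, rfl⟩ := Finset.mem_image.mp hvB
        exact hgnA a (Set.mem_toFinset.mp hvF)
      have hcardF : F.card = Fintype.card ↥A := Set.toFinset_card A
      have hcardB : B.card = Fintype.card ↥A := by
        rw [hB, Finset.card_image_of_injective _ hginj, Finset.card_univ]
      have hsumF : ∑ v ∈ F, x v = ∑ a : A, x ↑a :=
        Finset.sum_subtype _ (fun v => Set.mem_toFinset) x
      have hsumB : ∑ v ∈ B, x v = ∑ a : A, x (g a) := by
        rw [hB, Finset.sum_image (fun a _ b _ h => hginj h)]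
      have hpair : (Fintype.card ↥A : ℝ) ≤ ∑ a : A, (x ↑a + x (g a)) := by
        calc (Fintype.card ↥A : ℝ) = ∑ _a : A, (1 : ℝ) := by simp
          _ ≤ _ := Finset.sum_le_sum (fun a _ => hx.2 (hgadj a))
      have hrest : ∀ v ∈ (F ∪ B)ᶜ, (1/2 : ℝ) ≤ x v := by
        intro v hv
        have hvF : v ∉ F := fun h => (Finset.mem_compl.mp hv) (Finset.mem_union_left _ h)
        have hnot : ¬ x v < 1/2 := fun h => hvF (Set.mem_toFinset.mpr h)
        linarith
      have hsumrest : ((F ∪ B)ᶜ.card : ℝ) * (1/2) ≤ ∑ v ∈ (F ∪ B)ᶜ, x v := by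
        calc ((F ∪ B)ᶜ.card : ℝ) * (1/2) = ∑ _v ∈ (F ∪ B)ᶜ, (1/2 : ℝ) := by
              rw [Finset.sum_const, nsmul_eq_mul]
          _ ≤ _ := Finset.sum_le_sum hrest
      have hcardcompl : ((F ∪ B)ᶜ.card : ℝ)
          = (Fintype.card ↥Ws : ℝ) - 2 * (Fintype.card ↥A : ℝ) := by
        have h5 := Finset.card_add_card_compl (F ∪ B)
        have h6 : (F ∪ B).card = Fintype.card ↥A + Fintype.card ↥A := by
          rw [Finset.card_union_of_disjoint hFB, hcardF, hcardB]
        rw [h6] at h5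
        have := congrArg (Nat.cast : ℕ → ℝ) h5
        push_cast at this
        linarith
      have hsplit : fvcWeight x = ∑ v ∈ (F ∪ B), x v + ∑ v ∈ (F ∪ B)ᶜ, x v :=
        (Finset.sum_add_sum_compl _ _).symm
      have hFBsum : ∑ v ∈ F ∪ B, x v = ∑ a : A, (x ↑a + x (g a)) := by
        rw [Finset.sum_union hFB, hsumF, hsumB, ← Finset.sum_add_distrib]
      rw [hsplit, hFBsum]
      linarith
    have hne : {w : ℝ | ∃ x : ↥Ws → ℝ, IsFVC G' x ∧ w = fvcWeight x}.Nonempty :=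
      ⟨fvcWeight (fun _ => 1), ⟨fun _ => 1,
        ⟨fun v => by norm_num, fun u v _ => by norm_num⟩, rfl⟩⟩
    have hle : (Fintype.card ↥Ws : ℝ) / 2 ≤ LPopt G' := le_csInf hne hbound
    linarith
  -- Step D : MM(G') + |Z| ≤ MM(G)
  have hMM : MMnum G' + Z.ncard ≤ MMnum G := by
    obtain ⟨M', hM', hMcard⟩ := exists_max_matching G'
    set M1 : Finset (Sym2 V) := M'.image (Sym2.map (Subtype.val : ↥Ws → V)) with hM1
    set M2 : Finset (Sym2 V) := Finset.univ.image (fun a : Z => s((a : V), f a)) with hM2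
    have hvM1 : ∀ e ∈ M1, ∀ v ∈ e, v ∈ Ws := by
      intro e he v hv
      obtain ⟨e', _, rfl⟩ := Finset.mem_image.mp he
      obtain ⟨w, _, rfl⟩ := Sym2.mem_map.mp hv
      exact w.2
    have hvM2 : ∀ e ∈ M2, ∀ v ∈ e, v ∈ Z ∪ N := by
      intro e he v hv
      obtain ⟨a, _, rfl⟩ := Finset.mem_image.mp he
      rcases Sym2.mem_iff.mp hv with rfl | rfl
      · exact Or.inl a.2
      · exact Or.inr (hfN a)
    have hdisjM : Disjoint M1 M2 := by
      rw [Finset.disjoint_left]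
      intro e he1 he2
      induction e using Sym2.ind with
      | _ u v =>
        have h1 := hvM1 _ he1 u (by simp)
        have h2 := hvM2 _ he2 u (by simp)
        exact h1 h2
    have hmatch : IsMatchingSet G (M1 ∪ M2) := by
      constructor
      · intro e he
        rcases Finset.mem_union.mp he with he | he
        · obtain ⟨e', he', rfl⟩ := Finset.mem_image.mp he
          have hedge := hM'.1 e' he'
          induction e' using Sym2.ind with
          | _ u v =>
            rw [Sym2.map_pair_eq]
            exact (SimpleGraph.mem_edgeSet G).mpr
              ((SimpleGraph.mem_edgeSet G').mp hedge)
        · obtain ⟨a, _, rfl⟩ := Finset.mem_image.mp he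
          exact (SimpleGraph.mem_edgeSet G).mpr (hfadj a)
      · intro e he e2 he2 hne v hve hve2
        rcases Finset.mem_union.mp he with he | he <;>
          rcases Finset.mem_union.mp he2 with he2 | he2
        · obtain ⟨e1', h1', rfl⟩ := Finset.mem_image.mp he
          obtain ⟨e2', h2', rfl⟩ := Finset.mem_image.mp he2
          obtain ⟨w1, hw1, hww1⟩ := Sym2.mem_map.mp hve
          obtain ⟨w2, hw2, hww2⟩ := Sym2.mem_map.mp hve2
          have hw : w1 = w2 := Subtype.val_injective (hww1.trans hww2.symm)
          have hne' : e1' ≠ e2' := fun h => hne (by rw [h])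
          exact hM'.2 e1' h1' e2' h2' hne' w1 hw1 (hw ▸ hw2)
        · exact (hvM1 _ he v hve) ((hvM2 _ he2 v hve2))
        · exact (hvM1 _ he2 v hve2) ((hvM2 _ he v hve))
        · obtain ⟨a, _, rfl⟩ := Finset.mem_image.mp he
          obtain ⟨b, _, rfl⟩ := Finset.mem_image.mp he2
          have hab : a ≠ b := fun h => hne (by rw [h])
          rcases Sym2.mem_iff.mp hve with rfl | rfl <;>
            rcases Sym2.mem_iff.mp hve2 with h | h
          · exact hab (Subtype.val_injective h)
          · exact Set.disjoint_left.mp hdisjZN a.2 (h ▸ hfN b)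
          · exact Set.disjoint_left.mp hdisjZN b.2 (h ▸ hfN a)
          · exact hab (hfinj h)
    have hinj2 : Function.Injective (fun a : Z => s((a : V), f a)) := by
      intro a b hab
      simp only [Sym2.eq, Sym2.rel_iff', Prod.mk.injEq, Prod.swap_prod_mk] at hab
      rcases hab with ⟨h1, _⟩ | ⟨h1, _⟩
      · exact Subtype.val_injective h1
      · exact (Set.disjoint_left.mp hdisjZN a.2 (h1 ▸ hfN b)).elim
    have hcard : (M1 ∪ M2).card = MMnum G' + Z.ncard := by
      rw [Finset.card_union_of_disjoint hdisjM]
      congr 1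
      · rw [hM1, Finset.card_image_of_injective _ (Sym2.map.injective Subtype.val_injective),
          hMcard]
      · rw [hM2, Finset.card_image_of_injective _ hinj2, Finset.card_univ,
          Set.ncard_eq_toFinset_card' Z, Set.toFinset_card]
    calc MMnum G' + Z.ncard = (M1 ∪ M2).card := hcard.symm
      _ ≤ MMnum G := le_MMnum G _ hmatch
  -- Step E : LP(G) ≤ |V|/2
  have hLPG : 2 * LPopt G ≤ (Fintype.card V : ℝ) := by
    have hmem : fvcWeight (fun _ : V => (1/2 : ℝ)) ∈
        {w : ℝ | ∃ x : V → ℝ, IsFVC G x ∧ w = fvcWeight x} :=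
      ⟨fun _ => 1/2, ⟨fun v => by norm_num, fun u v _ => by norm_num⟩, rfl⟩
    have hbdd : BddBelow {w : ℝ | ∃ x : V → ℝ, IsFVC G x ∧ w = fvcWeight x} := by
      refine ⟨0, ?_⟩
      rintro w ⟨x, hx, rfl⟩
      exact Finset.sum_nonneg (fun v _ => (hx.1 v).1)
    have h1 : LPopt G ≤ fvcWeight (fun _ : V => (1/2 : ℝ)) := csInf_le hbdd hmem
    have h2 : fvcWeight (fun _ : V => (1/2 : ℝ)) = (Fintype.card V : ℝ) / 2 := by
      rw [fvcWeight, Finset.sum_const, Finset.card_univ, nsmul_eq_mul]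
      ring
    linarith
  -- Step F : cardinalities
  have hcards : (Fintype.card ↥Ws : ℝ) = (Fintype.card V : ℝ) - (2 * Z.ncard + 1) := by
    have h1 : (Z ∪ N).ncard + Ws.ncard = Nat.card V := Set.ncard_add_ncard_compl (Z ∪ N)
    have h2 : (Z ∪ N).ncard = Z.ncard + (Z.ncard + 1) := by
      rw [Set.ncard_union_eq hdisjZN (Set.toFinite _) (Set.toFinite _), hZsur]
    have h3 : Fintype.card ↥Ws = Ws.ncard := by
      rw [← Nat.card_coe_set_eq, Nat.card_eq_fintype_card]
    have h4 : Nat.card V = Fintype.card V := Nat.card_eq_fintype_card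
    have h5 : Fintype.card ↥Ws + (2 * Z.ncard + 1) = Fintype.card V := by omega
    have h6 := congrArg (Nat.cast : ℕ → ℝ) h5
    push_cast at h6
    linarith
  -- conclusion
  have hMMcast : (MMnum G' : ℝ) + (Z.ncard : ℝ) ≤ (MMnum G : ℝ) := by exact_mod_cast hMM
  rw [hZsur]
  push_cast
  linarith
end

section
/- Let G be a finite simple graph with surplus(G) ≥ 1, let Z be a nonempty independent set of G with |N(Z)| = |Z| + 1 such that N(Z) is also an independent set of G, and let G' be the struction graph obtained from G and Z. Then MM(G') − 2·LP(G') ≤ MM(G) − 2·LP(G) + |Z|. -/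
open scoped Classical

/-- The struction graph obtained from `G` and `Z`: delete `Z`, identify `N(Z)`
into a single new vertex `z` adjacent to exactly those remaining vertices that are
adjacent in `G` to some vertex of `N(Z)`. -/
def struction {V : Type} (G : SimpleGraph V) (Z : Set V) :
    SimpleGraph (((Z ∪ nbhd G Z)ᶜ : Set V) ⊕ Unit) where
  Adj a b :=
    match a, b with
    | Sum.inl u, Sum.inl v => G.Adj u.1 v.1
    | Sum.inl u, Sum.inr _ => ∃ w ∈ nbhd G Z, G.Adj w u.1
    | Sum.inr _, Sum.inl v => ∃ w ∈ nbhd G Z, G.Adj w v.1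
    | Sum.inr _, Sum.inr _ => False
  symm := by
    refine ⟨?_⟩
    rintro (u | u) (v | v) h
    · exact h.symm
    · exact h
    · exact h
    · exact h
  loopless := by
    refine ⟨?_⟩
    rintro (u | u) h
    · exact G.loopless.irrefl u.1 h
    · exact h

/-!
The two halves of the inequality hold separately: `MM(G') + |Z| ≤ MM(G)` and
`LP(G) ≤ LP(G') + |Z|`.

A fractional cover of `G'` extends to `G` by giving `N(Z)` the value `t` of the new vertex `z`
and `Z` the value `1 - t`; as `Z` and `N(Z)` are independent this is a cover, and as
`|N(Z)| = |Z| + 1` it is heavier by exactly `|Z|`.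

A maximum matching of `G'` lifts to `G` by replacing `z` with a vertex `w ∈ N(Z)` adjacent to
its partner. Since `surplus(G) ≥ 1`, every `X ⊆ Z` still has `|N(X) ∖ {w}| ≥ |X|`, so by Hall's
theorem `Z` can be matched into `N(Z) ∖ {w}`, which adds `|Z|` disjoint edges.
-/

lemma bddAbove_card_isMatchingSet {V : Type} [Finite V] (G : SimpleGraph V) :
    BddAbove {n : ℕ | ∃ M : Finset (Sym2 V), IsMatchingSet G M ∧ M.card = n} := by
  have : Fintype V := Fintype.ofFinite V
  refine ⟨Fintype.card (Sym2 V), ?_⟩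
  rintro n ⟨M, -, rfl⟩
  exact M.card_le_univ

lemma exists_isMatchingSet_card_eq_MMnum {V : Type} [Finite V] (G : SimpleGraph V) :
    ∃ M : Finset (Sym2 V), IsMatchingSet G M ∧ M.card = MMnum G :=
  Nat.sSup_mem (s := {n | ∃ M, IsMatchingSet G M ∧ M.card = n})
    ⟨0, ∅, by simp [IsMatchingSet], rfl⟩ (bddAbove_card_isMatchingSet G)

lemma IsMatchingSet.card_le_MMnum {V : Type} [Finite V] {G : SimpleGraph V}
    {M : Finset (Sym2 V)} (hM : IsMatchingSet G M) : M.card ≤ MMnum G :=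
  le_csSup (bddAbove_card_isMatchingSet G) ⟨M, hM, rfl⟩

lemma le_LPopt {V : Type} [Fintype V] (G : SimpleGraph V) {c : ℝ}
    (h : ∀ x : V → ℝ, IsFVC G x → c ≤ fvcWeight x) : c ≤ LPopt G := by
  have hone : IsFVC G fun _ => 1 := ⟨fun _ => ⟨zero_le_one, le_rfl⟩, fun _ _ _ => by norm_num⟩
  refine le_csInf ⟨_, _, hone, rfl⟩ ?_
  rintro w ⟨x, hx, rfl⟩
  exact h x hx

lemma LPopt_le_fvcWeight {V : Type} [Fintype V] {G : SimpleGraph V} {x : V → ℝ}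
    (hx : IsFVC G x) : LPopt G ≤ fvcWeight x := by
  refine csInf_le ⟨0, ?_⟩ ⟨x, hx, rfl⟩
  rintro w ⟨y, hy, rfl⟩
  exact Finset.sum_nonneg fun v _ => (hy.1 v).1

lemma IndepSet.mem_nbhd_of_adj {V : Type} {G : SimpleGraph V} {Z : Set V}
    (hZ : IndepSet G Z) {u v : V} (hu : u ∈ Z) (huv : G.Adj u v) : v ∈ nbhd G Z :=
  ⟨fun hv => hZ u hu v hv huv, u, hu, huv⟩

lemma mem_or_mem_nbhd_or_mem_compl {V : Type} (G : SimpleGraph V) (Z : Set V) (v : V) :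
    v ∈ Z ∨ v ∈ nbhd G Z ∨ v ∈ (Z ∪ nbhd G Z)ᶜ := by
  by_cases hZ : v ∈ Z
  · exact .inl hZ
  by_cases hN : v ∈ nbhd G Z
  · exact .inr (.inl hN)
  · exact .inr (.inr fun h => h.elim hZ hN)

lemma sum_eq_sum_compl_union_add_sum_add_sum {V : Type} [Fintype V] {A B : Set V}
    (hAB : Disjoint A B) (f : V → ℝ) :
    ∑ v, f v =
      ∑ a : ((A ∪ B)ᶜ : Set V), f a + ∑ v ∈ A.toFinset, f v + ∑ v ∈ B.toFinset, f v := by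
  rw [add_assoc, ← Finset.sum_union (Set.disjoint_toFinset.mpr hAB), ← Set.toFinset_union,
    ← Finset.sum_subtype (A ∪ B)ᶜ.toFinset (fun _ => Set.mem_toFinset), Set.toFinset_compl,
    Finset.sum_compl_add_sum]

noncomputable def liftCover {V : Type} (G : SimpleGraph V) (Z : Set V)
    (x' : ((Z ∪ nbhd G Z)ᶜ : Set V) ⊕ Unit → ℝ) (v : V) : ℝ :=
  if h : v ∈ (Z ∪ nbhd G Z)ᶜ then x' (.inl ⟨v, h⟩)
  else if v ∈ Z then 1 - x' (.inr ()) else x' (.inr ())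

section liftCover

variable {V : Type} {G : SimpleGraph V} {Z : Set V} {x' : ((Z ∪ nbhd G Z)ᶜ : Set V) ⊕ Unit → ℝ}

lemma liftCover_of_mem_compl {v : V} (hv : v ∈ (Z ∪ nbhd G Z)ᶜ) :
    liftCover G Z x' v = x' (.inl ⟨v, hv⟩) :=
  dif_pos hv

lemma liftCover_of_mem {v : V} (hv : v ∈ Z) : liftCover G Z x' v = 1 - x' (.inr ()) := by
  rw [liftCover, dif_neg fun h => h (.inl hv), if_pos hv]

lemma liftCover_of_mem_nbhd {v : V} (hv : v ∈ nbhd G Z) : liftCover G Z x' v = x' (.inr ()) := by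
  rw [liftCover, dif_neg fun h => h (.inr hv), if_neg hv.1]

lemma isFVC_liftCover (hZ : IndepSet G Z) (hN : IndepSet G (nbhd G Z))
    (hx' : IsFVC (struction G Z) x') : IsFVC G (liftCover G Z x') := by
  have ht := hx'.1 (.inr ())
  have hz : ∀ a (ha : a ∈ (Z ∪ nbhd G Z)ᶜ) b, b ∈ nbhd G Z → G.Adj a b →
      1 ≤ x' (.inl ⟨a, ha⟩) + x' (.inr ()) := fun a ha b hb hab =>
    hx'.2 (show (struction G Z).Adj (.inl ⟨a, ha⟩) (.inr ()) from ⟨b, hb, hab.symm⟩)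
  refine ⟨fun v => ?_, fun u v huv => ?_⟩
  · rcases mem_or_mem_nbhd_or_mem_compl G Z v with hv | hv | hv
    · rw [liftCover_of_mem hv]; constructor <;> linarith
    · rw [liftCover_of_mem_nbhd hv]; exact ht
    · rw [liftCover_of_mem_compl hv]; exact hx'.1 _
  rcases mem_or_mem_nbhd_or_mem_compl G Z u with hu | hu | hu <;>
    rcases mem_or_mem_nbhd_or_mem_compl G Z v with hv | hv | hv
  · exact absurd huv (hZ u hu v hv)
  · rw [liftCover_of_mem hu, liftCover_of_mem_nbhd hv]; linarith
  · exact absurd (.inr (hZ.mem_nbhd_of_adj hu huv)) hv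
  · rw [liftCover_of_mem_nbhd hu, liftCover_of_mem hv]; linarith
  · exact absurd huv (hN u hu v hv)
  · rw [liftCover_of_mem_nbhd hu, liftCover_of_mem_compl hv, add_comm]
    exact hz v hv u hu huv.symm
  · exact absurd (.inr (hZ.mem_nbhd_of_adj hv huv.symm)) hu
  · rw [liftCover_of_mem_compl hu, liftCover_of_mem_nbhd hv]; exact hz u hu v hv huv
  · rw [liftCover_of_mem_compl hu, liftCover_of_mem_compl hv]
    exact hx'.2 (show (struction G Z).Adj (.inl ⟨u, hu⟩) (.inl ⟨v, hv⟩) from huv)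

lemma fvcWeight_liftCover [Fintype V] (hZsur : (nbhd G Z).ncard = Z.ncard + 1) :
    fvcWeight (liftCover G Z x') = fvcWeight x' + Z.ncard := by
  have hdisj : Disjoint Z (nbhd G Z) := Set.disjoint_right.mpr fun _ hv => hv.1
  have hN : ((nbhd G Z).toFinset.card : ℝ) = Z.toFinset.card + 1 := by
    rw [← Set.ncard_eq_toFinset_card', ← Set.ncard_eq_toFinset_card', hZsur, Nat.cast_succ]
  rw [fvcWeight, fvcWeight, sum_eq_sum_compl_union_add_sum_add_sum hdisj,
    Finset.sum_congr rfl fun v _ => liftCover_of_mem_compl v.2,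
    Finset.sum_congr rfl fun v hv => liftCover_of_mem (Set.mem_toFinset.mp hv),
    Finset.sum_congr rfl fun v hv => liftCover_of_mem_nbhd (Set.mem_toFinset.mp hv),
    Finset.sum_const, Finset.sum_const, nsmul_eq_mul, nsmul_eq_mul, hN,
    Set.ncard_eq_toFinset_card', Fintype.sum_sum_type]
  simp only [Subtype.coe_eta, Finset.univ_unique, PUnit.default_eq_unit, Finset.sum_singleton]
  ring

lemma LPopt_le_LPopt_struction_add [Fintype V] (hZ : IndepSet G Z)
    (hZsur : (nbhd G Z).ncard = Z.ncard + 1) (hN : IndepSet G (nbhd G Z)) :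
    LPopt G ≤ LPopt (struction G Z) + Z.ncard := by
  rw [← sub_le_iff_le_add]
  refine le_LPopt _ fun x' hx' => ?_
  have := LPopt_le_fvcWeight (isFVC_liftCover hZ hN hx')
  rw [fvcWeight_liftCover hZsur] at this
  linarith

end liftCover

section Matching

variable {V : Type} {G : SimpleGraph V}

lemma IsMatchingSet.eq_of_mem_of_mem {M : Finset (Sym2 V)} (hM : IsMatchingSet G M)
    {e f : Sym2 V} (he : e ∈ M) (hf : f ∈ M) {v : V} (hve : v ∈ e) (hvf : v ∈ f) : e = f :=
  by_contra fun hne => hM.2 e he f hf hne v hve hvf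

lemma card_add_card_le_MMnum [Finite V] {M₁ M₂ : Finset (Sym2 V)} (h₁ : IsMatchingSet G M₁)
    (h₂ : IsMatchingSet G M₂) (S : Set V) (hS₁ : ∀ e ∈ M₁, ∀ v ∈ e, v ∈ S)
    (hS₂ : ∀ e ∈ M₂, ∀ v ∈ e, v ∉ S) : M₁.card + M₂.card ≤ MMnum G := by
  have hdisj : Disjoint M₁ M₂ := Finset.disjoint_left.mpr fun e he₁ he₂ =>
    hS₂ e he₂ _ (Sym2.out_fst_mem e) (hS₁ e he₁ _ (Sym2.out_fst_mem e))
  have hM : IsMatchingSet G (M₁ ∪ M₂) := by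
    refine ⟨fun e he => (Finset.mem_union.mp he).elim (h₁.1 e) (h₂.1 e), ?_⟩
    intro e he f hf hne v hve hvf
    rcases Finset.mem_union.mp he with he | he <;> rcases Finset.mem_union.mp hf with hf | hf
    · exact h₁.2 e he f hf hne v hve hvf
    · exact hS₂ f hf v hvf (hS₁ e he v hve)
    · exact hS₂ e he v hve (hS₁ f hf v hvf)
    · exact h₂.2 e he f hf hne v hve hvf
  rw [← Finset.card_union_of_disjoint hdisj]
  exact hM.card_le_MMnum

lemma IsMatchingSet.image_map {W : Type} {H : SimpleGraph W} {M : Finset (Sym2 W)}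
    (hM : IsMatchingSet H M) {g : W → V} (hg : Function.Injective g)
    (hE : ∀ e ∈ M, Sym2.map g e ∈ G.edgeSet) : IsMatchingSet G (M.image (Sym2.map g)) := by
  refine ⟨fun _ he' => ?_, fun _ he' _ hf' hne v hve hvf => ?_⟩
  · obtain ⟨e, he, rfl⟩ := Finset.mem_image.mp he'
    exact hE e he
  obtain ⟨e, he, rfl⟩ := Finset.mem_image.mp he'
  obtain ⟨f, hf, rfl⟩ := Finset.mem_image.mp hf'
  obtain ⟨a, ha, rfl⟩ := Sym2.mem_map.mp hve
  obtain ⟨b, hb, hab⟩ := Sym2.mem_map.mp hvf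
  exact hM.2 e he f hf (fun h => hne (h ▸ rfl)) a ha (hg hab ▸ hb)

section MatchingOfInjective

variable {S : Set V} [Fintype S] {f : S → V}

lemma isMatchingSet_image_mk (hf : Function.Injective f) (hfS : ∀ u, f u ∉ S)
    (hadj : ∀ u : S, G.Adj u (f u)) :
    IsMatchingSet G (Finset.univ.image fun u : S => s(u.1, f u)) := by
  refine ⟨fun _ he => ?_, fun _ he _ he' hne v hv hv' => ?_⟩
  · obtain ⟨u, -, rfl⟩ := Finset.mem_image.mp he
    exact hadj u
  obtain ⟨u, -, rfl⟩ := Finset.mem_image.mp he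
  obtain ⟨u', -, rfl⟩ := Finset.mem_image.mp he'
  have huu' : u ≠ u' := fun h => hne (h ▸ rfl)
  rcases Sym2.mem_iff.mp hv with rfl | rfl <;> rcases Sym2.mem_iff.mp hv' with h | h
  · exact huu' (Subtype.ext h)
  · exact hfS u' (h ▸ u.2)
  · exact hfS u (h ▸ u'.2)
  · exact huu' (hf h)

lemma card_image_mk (hfS : ∀ u, f u ∉ S) :
    (Finset.univ.image fun u : S => s(u.1, f u)).card = Fintype.card S := by
  refine Finset.card_image_of_injective _ fun u u' h => ?_
  rcases Sym2.eq_iff.mp h with ⟨h, -⟩ | ⟨h, -⟩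
  · exact Subtype.ext h
  · exact absurd (h ▸ u.2) (hfS u')

end MatchingOfInjective

lemma IndepSet.mono {X Z : Set V} (hZ : IndepSet G Z) (hXZ : X ⊆ Z) : IndepSet G X :=
  fun a ha b hb => hZ a (hXZ ha) b (hXZ hb)

lemma exists_injective_adj_nbhd_ne [Fintype V] (hsur : SurplusGE G 1) {Z : Set V}
    (hZ : IndepSet G Z) (w : V) :
    ∃ f : Z → V, Function.Injective f ∧ ∀ u, f u ∈ nbhd G Z ∧ f u ≠ w ∧ G.Adj u (f u) := by
  let t : Z → Finset V := fun u => ((nbhd G Z).toFinset.erase w).filter (G.Adj u)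
  suffices hall : ∀ s : Finset Z, s.card ≤ (s.biUnion t).card by
    obtain ⟨f, hf, hft⟩ := (Finset.all_card_le_biUnion_card_iff_exists_injective t).mp hall
    refine ⟨f, hf, fun u => ?_⟩
    have := hft u
    simp only [t, Finset.mem_filter, Finset.mem_erase, Set.mem_toFinset] at this
    exact ⟨this.1.2, this.1.1, this.2⟩
  intro s
  rcases s.eq_empty_or_nonempty with rfl | hs
  · simp
  let X : Set V := Subtype.val '' (s : Set Z)
  have hXZ : X ⊆ Z := by
    rintro _ ⟨u, -, rfl⟩
    exact u.2
  have hX : X.ncard = s.card := by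
    rw [Set.ncard_image_of_injective _ Subtype.val_injective, Set.ncard_coe_finset]
  have hsurX := hsur X ((Finset.coe_nonempty.mpr hs).image _) (hZ.mono hXZ)
  have hsub : (nbhd G X).toFinset.erase w ⊆ s.biUnion t := by
    intro v hv
    obtain ⟨hvw, hv⟩ := Finset.mem_erase.mp hv
    obtain ⟨-, _, ⟨u, hu, rfl⟩, huv⟩ := Set.mem_toFinset.mp hv
    refine Finset.mem_biUnion.mpr ⟨u, hu, ?_⟩
    simp only [t, Finset.mem_filter, Finset.mem_erase, Set.mem_toFinset]
    exact ⟨⟨hvw, hZ.mem_nbhd_of_adj u.2 huv⟩, huv⟩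
  have herase := Finset.pred_card_le_card_erase (s := (nbhd G X).toFinset) (a := w)
  rw [← Set.ncard_eq_toFinset_card'] at herase
  have := Finset.card_le_card hsub
  omega

lemma exists_mem_nbhd_adj_of_isMatchingSet_struction {Z : Set V} (hN : (nbhd G Z).Nonempty)
    {M : Finset (Sym2 (((Z ∪ nbhd G Z)ᶜ : Set V) ⊕ Unit))}
    (hM : IsMatchingSet (struction G Z) M) :
    ∃ w ∈ nbhd G Z, ∀ u : ((Z ∪ nbhd G Z)ᶜ : Set V), s(.inl u, .inr ()) ∈ M → G.Adj w u := by
  by_cases h : ∃ u : ((Z ∪ nbhd G Z)ᶜ : Set V), s(.inl u, .inr ()) ∈ M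
  · obtain ⟨u₀, hu₀⟩ := h
    obtain ⟨w, hw, hwu₀⟩ : (struction G Z).Adj (.inl u₀) (.inr ()) := hM.1 _ hu₀
    refine ⟨w, hw, fun u hu => ?_⟩
    have := hM.eq_of_mem_of_mem hu hu₀ (Sym2.mem_mk_right _ _) (Sym2.mem_mk_right _ _)
    obtain rfl : u = u₀ := by simpa using this
    exact hwu₀
  · simp only [not_exists] at h
    obtain ⟨w, hw⟩ := hN
    exact ⟨w, hw, fun u hu => absurd hu (h u)⟩

end Matching

section structionLift

variable {V : Type} {G : SimpleGraph V} {Z : Set V} {w : V}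

def structionLift (G : SimpleGraph V) (Z : Set V) (w : V) : ((Z ∪ nbhd G Z)ᶜ : Set V) ⊕ Unit → V :=
  Sum.elim Subtype.val fun _ => w

lemma structionLift_injective (hw : w ∈ nbhd G Z) : Function.Injective (structionLift G Z w) := by
  have hwC : w ∉ (Z ∪ nbhd G Z)ᶜ := fun h => h (.inr hw)
  rintro (a | a) (b | b) h
  · exact congrArg Sum.inl (Subtype.ext h)
  · exact absurd ((show a.1 = w from h) ▸ a.2) hwC
  · exact absurd ((show w = b.1 from h) ▸ b.2) hwC
  · rfl

lemma map_structionLift_mem_edgeSet {M : Finset (Sym2 (((Z ∪ nbhd G Z)ᶜ : Set V) ⊕ Unit))}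
    (hM : IsMatchingSet (struction G Z) M)
    (hw : ∀ u : ((Z ∪ nbhd G Z)ᶜ : Set V), s(.inl u, .inr ()) ∈ M → G.Adj w u) :
    ∀ e ∈ M, Sym2.map (structionLift G Z w) e ∈ G.edgeSet := by
  intro e he
  induction e using Sym2.ind with
  | h a b =>
    have hab : (struction G Z).Adj a b := hM.1 _ he
    rcases a with u | ⟨⟩ <;> rcases b with v | ⟨⟩
    · exact hab
    · exact (hw u he).symm
    · exact hw v (Sym2.eq_swap ▸ he)
    · exact hab.elim

end structionLift

lemma MMnum_struction_add_ncard_le {V : Type} [Fintype V] {G : SimpleGraph V} {Z : Set V}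
    (hsur : SurplusGE G 1) (hZ : IndepSet G Z) (hZsur : (nbhd G Z).ncard = Z.ncard + 1) :
    MMnum (struction G Z) + Z.ncard ≤ MMnum G := by
  obtain ⟨M', hM', hM'card⟩ := exists_isMatchingSet_card_eq_MMnum (struction G Z)
  obtain ⟨w, hwN, hw⟩ := exists_mem_nbhd_adj_of_isMatchingSet_struction
    (Set.nonempty_of_ncard_ne_zero (by omega)) hM'
  obtain ⟨f, hf, hfN⟩ := exists_injective_adj_nbhd_ne hsur hZ w
  have hg := structionLift_injective (G := G) hwN
  have hML := hM'.image_map hg (map_structionLift_mem_edgeSet hM' hw)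
  have hMZ := isMatchingSet_image_mk hf (fun u => (hfN u).1.1) fun u => (hfN u).2.2
  have hML_range : ∀ e ∈ M'.image (Sym2.map (structionLift G Z w)), ∀ v ∈ e,
      v ∈ Set.range (structionLift G Z w) := by
    intro e he v hv
    obtain ⟨e, -, rfl⟩ := Finset.mem_image.mp he
    obtain ⟨a, -, rfl⟩ := Sym2.mem_map.mp hv
    exact Set.mem_range_self a
  have hMZ_range : ∀ e ∈ Finset.univ.image fun u : Z => s(u.1, f u), ∀ v ∈ e,
      v ∉ Set.range (structionLift G Z w) := by
    intro e he v hv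
    obtain ⟨u, -, rfl⟩ := Finset.mem_image.mp he
    rcases Sym2.mem_iff.mp hv with rfl | rfl <;> rintro ⟨a | ⟨⟩, ha⟩
    · exact a.2 (.inl ((show a.1 = u from ha) ▸ u.2))
    · exact hwN.1 ((show w = u from ha) ▸ u.2)
    · exact a.2 (.inr ((show a.1 = f u from ha) ▸ (hfN u).1))
    · exact (hfN u).2.1 (show w = f u from ha).symm
  have := card_add_card_le_MMnum hML hMZ _ hML_range hMZ_range
  rwa [Finset.card_image_of_injective _ (Sym2.map.injective hg), hM'card,
    card_image_mk fun u => (hfN u).1.1, ← Set.toFinset_card, ← Set.ncard_eq_toFinset_card'] at this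

theorem rule_three_safe_general {V : Type} [Fintype V] (G : SimpleGraph V)
    (hsur : SurplusGE G 1) (Z : Set V) (hZind : IndepSet G Z)
    (hZsur : (nbhd G Z).ncard = Z.ncard + 1) (hNind : IndepSet G (nbhd G Z)) :
    (MMnum (struction G Z) : ℝ) - 2 * LPopt (struction G Z) ≤
      (MMnum G : ℝ) - 2 * LPopt G + (Z.ncard : ℝ) := by
  have hMM : (MMnum (struction G Z) : ℝ) + Z.ncard ≤ MMnum G := by
    exact_mod_cast MMnum_struction_add_ncard_le hsur hZind hZsur
  have hLP := LPopt_le_LPopt_struction_add hZind hZsur hNind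
  linarith

/-- Reduction Rule 3 (struction) is safe:
`MM(G') − 2LP(G') ≤ MM(G) − 2LP(G) + |Z|`. -/
theorem rule_three_safe {V : Type} [Fintype V] (G : SimpleGraph V)
    (hsur : SurplusGE G 1) (Z : Set V) (hZne : Z.Nonempty) (hZind : IndepSet G Z)
    (hZsur : (nbhd G Z).ncard = Z.ncard + 1) (hNind : IndepSet G (nbhd G Z)) :
    (MMnum (struction G Z) : ℝ) - 2 * LPopt (struction G Z) ≤
      (MMnum G : ℝ) - 2 * LPopt G + (Z.ncard : ℝ) :=
  rule_three_safe_general G hsur Z hZind hZsur hNind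
end
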